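/- arXiv:1801.08387 — 4 statements merged into one kernel-verified Lean document; each statement's English description precedes it below -/
import Mathlib

section
/- Let V be a complex vector space with a Virasoro representation of central charge c = −22/5 and a Shapovalov-compatible bilinear form B, and let w ∈ V be a (2,5)-model lowest-weight vector: L_n w = 0 for all n ≤ −1, L₀w = −(1/5)·w, and the null-vector relations (2L₂ − 5L₁L₁)w = 0 and (L₃ − 5L₂L₁)w = 0 hold. Then the vector ψ := (52·L₄ − 25·L₁L₃)w is quasi-primary, i.e. L₋₁ψ = 0, and B(ψ, ψ) = (5928/5)·B(w, w). -/
/-!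
Write `h = -1/5` and `c = -22/5`. The two null relations express `L₂w` and `L₃w` through `L₁`
alone: `L₂w = (5/2)L₁²w` and, using `[L₂, L₁] = -L₃`, `L₃w = (25/12)L₁³w`. Commuting `L₋₁`
through `ψ` gives `L₋₁ψ = 120 L₃w - 250 L₁³w`, which therefore vanishes. By compatibility of `B`,
`B(ψ, ψ) = 52 B(w, L₋₄ψ) - 25 B(L₃w, L₋₁ψ) = 52 B(w, L₋₄ψ)`, and `L₋₄ψ = (10c - 334h)w = (114/5)w`
follows from `L₋ₘL_m w = (2mh + c m(m²-1)/12) w`.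
-/

section

variable {V : Type*} [AddCommGroup V] [Module ℂ V]

def IsVirasoroRep (c : ℂ) (L : ℤ → Module.End ℂ V) : Prop :=
  ∀ (n m : ℤ) (x : V), L n (L m x) - L m (L n x) =
    ((m : ℂ) - (n : ℂ)) • L (m + n) x +
      (if m + n = 0 then c / 12 * (m : ℂ) * ((m : ℂ) ^ 2 - 1) else 0) • x

def IsLowestWeightVector (L : ℤ → Module.End ℂ V) (h : ℂ) (w : V) : Prop :=
  (∀ n : ℤ, n ≤ -1 → L n w = 0) ∧ L 0 w = h • w

theorem apply_two_eq_of_null {L : ℤ → Module.End ℂ V} {w : V}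
    (hnull1 : (2 : ℂ) • L 2 w - (5 : ℂ) • L 1 (L 1 w) = 0) :
    L 2 w = (5 / 2 : ℂ) • L 1 (L 1 w) := by
  linear_combination (norm := module) (1 / 2 : ℂ) • hnull1

namespace IsVirasoroRep

variable {c : ℂ} {L : ℤ → Module.End ℂ V}

theorem apply_apply_of_add_ne_zero (hL : IsVirasoroRep c L) {n m : ℤ} (hnm : m + n ≠ 0)
    (x : V) : L n (L m x) = L m (L n x) + ((m : ℂ) - n) • L (m + n) x := by
  have h := hL n m x
  rw [if_neg hnm, zero_smul, add_zero] at h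
  rw [← h, add_sub_cancel]

theorem neg_apply_apply (hL : IsVirasoroRep c L) (m : ℤ) (x : V) :
    L (-m) (L m x) =
      L m (L (-m) x) + (2 * m : ℂ) • L 0 x + (c / 12 * m * ((m : ℂ) ^ 2 - 1)) • x := by
  have h := hL (-m) m x
  rw [if_pos (add_neg_cancel m), add_neg_cancel] at h
  push_cast at h
  linear_combination (norm := module) h

theorem zero_apply_apply (hL : IsVirasoroRep c L) (m : ℤ) (x : V) :
    L 0 (L m x) = L m (L 0 x) + (m : ℂ) • L m x := by
  have h := hL 0 m x
  rw [add_zero, Int.cast_zero, sub_zero] at h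
  split_ifs at h with hm
  · subst hm
    simp
  · rwa [zero_smul, add_zero, sub_eq_iff_eq_add'] at h

theorem apply_three_eq_of_null (hL : IsVirasoroRep c L) {w : V}
    (hnull1 : (2 : ℂ) • L 2 w - (5 : ℂ) • L 1 (L 1 w) = 0)
    (hnull2 : L 3 w - (5 : ℂ) • L 2 (L 1 w) = 0) :
    L 3 w = (25 / 12 : ℂ) • L 1 (L 1 (L 1 w)) := by
  have hL21 : L 2 (L 1 w) = L 1 (L 2 w) - L 3 w := by
    rw [hL.apply_apply_of_add_ne_zero (by norm_num)]
    norm_num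
    module
  rw [hL21, apply_two_eq_of_null hnull1, map_smul] at hnull2
  linear_combination (norm := module) (1 / 6 : ℂ) • hnull2

end IsVirasoroRep

namespace IsLowestWeightVector

variable {c h : ℂ} {L : ℤ → Module.End ℂ V} {w : V}

theorem apply_neg (hw : IsLowestWeightVector L h w) {k : ℤ} (hk : 0 < k) : L (-k) w = 0 :=
  hw.1 (-k) (by omega)

theorem neg_apply_apply_of_ne (hL : IsVirasoroRep c L) (hw : IsLowestWeightVector L h w)
    {k m : ℤ} (hk : 0 < k) (hkm : k ≠ m) :
    L (-k) (L m w) = ((m : ℂ) + k) • L (m - k) w := by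
  rw [hL.apply_apply_of_add_ne_zero (by omega), hw.apply_neg hk, map_zero, zero_add]
  push_cast
  rw [sub_neg_eq_add, ← sub_eq_add_neg]

theorem neg_apply_apply_self (hL : IsVirasoroRep c L) (hw : IsLowestWeightVector L h w)
    {m : ℤ} (hm : 0 < m) :
    L (-m) (L m w) = (2 * m * h + c / 12 * m * ((m : ℂ) ^ 2 - 1)) • w := by
  rw [hL.neg_apply_apply, hw.apply_neg hm, map_zero, zero_add, hw.2]
  module

theorem zero_apply_apply (hL : IsVirasoroRep c L) (hw : IsLowestWeightVector L h w) (m : ℤ) :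
    L 0 (L m w) = (h + m) • L m w := by
  rw [hL.zero_apply_apply, hw.2, map_smul, add_smul]

theorem neg_one_apply_psi (hL : IsVirasoroRep c L)
    (hw : IsLowestWeightVector L (-(1 / 5)) w)
    (hnull1 : (2 : ℂ) • L 2 w - (5 : ℂ) • L 1 (L 1 w) = 0)
    (hnull2 : L 3 w - (5 : ℂ) • L 2 (L 1 w) = 0) :
    L (-1) ((52 : ℂ) • L 4 w - (25 : ℂ) • L 1 (L 3 w)) = 0 := by
  have hL1L4 : L (-1) (L 4 w) = (5 : ℂ) • L 3 w := by
    rw [hw.neg_apply_apply_of_ne hL one_pos (by norm_num)]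
    norm_num
  have hL1L1L3 : L (-1) (L 1 (L 3 w)) = (10 : ℂ) • L 1 (L 1 (L 1 w)) + (28 / 5 : ℂ) • L 3 w := by
    rw [hL.neg_apply_apply 1, hw.neg_apply_apply_of_ne hL one_pos (by norm_num),
      hw.zero_apply_apply hL]
    norm_num
    rw [apply_two_eq_of_null hnull1, map_smul]
    module
  rw [map_sub, map_smul, map_smul, hL1L4, hL1L1L3, hL.apply_three_eq_of_null hnull1 hnull2]
  module

theorem neg_four_apply_psi (hL : IsVirasoroRep c L) (hw : IsLowestWeightVector L h w) :
    L (-4) ((52 : ℂ) • L 4 w - (25 : ℂ) • L 1 (L 3 w)) = (10 * c - 334 * h) • w := by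
  have hL4L3 : L (-4) (L 3 w) = 0 := by
    rw [hw.neg_apply_apply_of_ne hL (by norm_num) (by norm_num)]
    norm_num [hw.apply_neg one_pos]
  have hL4L1L3 : L (-4) (L 1 (L 3 w)) = (30 * h + 10 * c) • w := by
    rw [hL.apply_apply_of_add_ne_zero (by norm_num), hL4L3, map_zero, zero_add]
    norm_num
    rw [hw.neg_apply_apply_self hL (by norm_num : (0 : ℤ) < 3), smul_smul]
    norm_num
    ring_nf
  rw [map_sub, map_smul, map_smul, hL4L1L3, hw.neg_apply_apply_self hL (by norm_num)]
  module

end IsLowestWeightVector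

end

/-- for a `(2,5)`-model lowest-weight vector `w` (weight `−1/5`,
null relations `(2L₂ − 5L₁L₁)w = 0` and `(L₃ − 5L₂L₁)w = 0`), the vector
`ψ = (52L₄ − 25L₁L₃)w` is quasi-primary and `B(ψ, ψ) = (5928/5)·B(w, w)`. -/
theorem quasiprimary_weight_four_W_norm
    (V : Type*) [AddCommGroup V] [Module ℂ V]
    (c : ℂ) (hc : c = -22/5) (L : ℤ → Module.End ℂ V)
    (hL : ∀ (n m : ℤ) (x : V), L n (L m x) - L m (L n x) =
      ((m : ℂ) - (n : ℂ)) • L (m + n) x +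
        (if m + n = 0 then c / 12 * (m : ℂ) * ((m : ℂ) ^ 2 - 1) else 0) • x)
    (B : V →ₗ[ℂ] V →ₗ[ℂ] ℂ)
    (hB : ∀ (n : ℤ) (x y : V), B (L n x) y = B x (L (-n) y))
    (w : V) (hw : ∀ n : ℤ, n ≤ -1 → L n w = 0)
    (hw0 : L 0 w = (-(1/5) : ℂ) • w)
    (hnull1 : (2 : ℂ) • L 2 w - (5 : ℂ) • L 1 (L 1 w) = 0)
    (hnull2 : L 3 w - (5 : ℂ) • L 2 (L 1 w) = 0)
    (ψ : V) (hψ : ψ = (52 : ℂ) • L 4 w - (25 : ℂ) • L 1 (L 3 w)) :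
    L (-1) ψ = 0 ∧ B ψ ψ = (5928/5 : ℂ) * B w w := by
  have hlw : IsLowestWeightVector L (-(1 / 5)) w := ⟨hw, hw0⟩
  have hqp : L (-1) ψ = 0 := hψ ▸ hlw.neg_one_apply_psi hL hnull1 hnull2
  have h4 : L (-4) ψ = (10 * c - 334 * -(1 / 5)) • w := hψ ▸ hlw.neg_four_apply_psi hL
  refine ⟨hqp, ?_⟩
  calc B ψ ψ = 52 * B (L 4 w) ψ - 25 * B (L 1 (L 3 w)) ψ := by
        conv_lhs => enter [1]; rw [hψ]
        simp only [map_sub, map_smul, LinearMap.sub_apply, LinearMap.smul_apply, smul_eq_mul]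
    _ = 52 * B w (L (-4) ψ) - 25 * B (L 3 w) (L (-1) ψ) := by rw [hB, hB]
    _ = (5928 / 5 : ℂ) * B w w := by
        rw [h4, hqp, hc, map_smul, map_zero, smul_eq_mul]
        ring
end

section
/- Let V be a complex vector space with a Virasoro representation of central charge c = −22/5 and a Shapovalov-compatible bilinear form B, and let w ∈ V be a (2,5)-model lowest-weight vector: L_n w = 0 for all n ≤ −1, L₀w = −(1/5)·w, and the null-vector relations (2L₂ − 5L₁L₁)w = 0 and (L₃ − 5L₂L₁)w = 0 hold. Then the vector ψ := (4·L₁L₅ + 3·L₃L₃ − (684/35)·L₆)w is quasi-primary, i.e. L₋₁ψ = 0, and B(ψ, ψ) = (6539268/6125)·B(w, w). -/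
/-!
Everything reduces to normal ordering: the commutation relation, applied with the smaller mode on
the left, moves lowering modes to the right until they hit `w`, where they vanish or act by the
weight. In this way `L₋₁ψ` becomes a combination of `L₅w`, `L₄L₁w` and `L₃L₂w`, which vanishes by
the level-five descendants `L₃N₁`, `L₂L₁N₁`, `L₂N₂`, `L₁L₁N₂` of the null vectors
`N₁ = (2L₂ − 5L₁L₁)w` and `N₂ = (L₃ − 5L₂L₁)w`.
For the norm, compatibility of `B` moves the modes of the left `ψ` across:
`B(ψ, ψ) = B(w, (4L₋₅L₋₁ + 3L₋₃L₋₃ − (684/35)L₋₆)ψ)`. The first term vanishes since `ψ` is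
quasi-primary, and `L₋₃L₋₃ψ`, `L₋₆ψ` are multiples of `w` given by polynomials in `c` and `h`.
-/

section

variable {V : Type*} [AddCommGroup V] [Module ℂ V]

def IsLowestWeight (L : ℤ → Module.End ℂ V) (h : ℂ) (w : V) : Prop :=
  (∀ n : ℤ, n ≤ -1 → L n w = 0) ∧ L 0 w = h • w

noncomputable def weightSixVector (L : ℤ → Module.End ℂ V) (w : V) : V :=
  (4 : ℂ) • L 1 (L 5 w) + (3 : ℂ) • L 3 (L 3 w) - (684/35 : ℂ) • L 6 w

variable {c h : ℂ} {L : ℤ → Module.End ℂ V} {w : V}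

/-- The guard `n < m` orients this rewrite for `simp`: repeated use moves smaller modes to the
right and terminates. -/
theorem IsVirasoroRep.apply_apply_of_lt (hL : IsVirasoroRep c L) {n m : ℤ} (_ : n < m) (x : V) :
    L n (L m x) = L m (L n x) + ((m : ℂ) - n) • L (m + n) x +
      (if m + n = 0 then c / 12 * m * ((m : ℂ) ^ 2 - 1) else 0) • x := by
  rw [add_assoc, ← hL n m x, add_sub_cancel]

theorem IsVirasoroRep.null_relation_level_five (hL : IsVirasoroRep c L)
    (hnull1 : (2 : ℂ) • L 2 w - (5 : ℂ) • L 1 (L 1 w) = 0)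
    (hnull2 : L 3 w - (5 : ℂ) • L 2 (L 1 w) = 0) :
    (24 : ℂ) • L 4 (L 1 w) + (24 : ℂ) • L 3 (L 2 w) = (72/5 : ℂ) • L 5 w := by
  have h31 := congrArg (L 3) hnull1
  have h211 := congrArg (fun v ↦ L 2 (L 1 v)) hnull1
  have h22 := congrArg (L 2) hnull2
  have h112 := congrArg (fun v ↦ L 1 (L 1 v)) hnull2
  simp (disch := decide) only [map_add, map_sub, map_smul, map_zero, hL.apply_apply_of_lt,
    Int.reduceAdd, ↓reduceIte, Int.reduceEq] at h31 h211 h22 h112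
  linear_combination (norm := module) (36/5 : ℂ) • h31 + (4 : ℂ) • h211 + (8/5 : ℂ) • h22 -
    (4 : ℂ) • h112

theorem neg_one_apply_weightSixVector (hL : IsVirasoroRep c L) (hw : IsLowestWeight L h w) :
    L (-1) (weightSixVector L w) =
      (8 * h - 64/5) • L 5 w + (24 : ℂ) • L 4 (L 1 w) + (24 : ℂ) • L 3 (L 2 w) := by
  simp (disch := decide) only [weightSixVector, map_add, map_sub, map_smul, map_zero,
    hL.apply_apply_of_lt, hw.1, hw.2, Int.reduceAdd, ↓reduceIte, Int.reduceEq]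
  module

theorem neg_six_apply_weightSixVector (hL : IsVirasoroRep c L) (hw : IsLowestWeight L h w) :
    L (-6) (weightSixVector L w) = (7262/35 * h - 8 * c) • w := by
  simp (disch := decide) only [weightSixVector, map_add, map_sub, map_smul, map_zero,
    hL.apply_apply_of_lt, hw.1, hw.2, Int.reduceAdd, ↓reduceIte, Int.reduceEq]
  module

theorem neg_three_neg_three_apply_weightSixVector (hL : IsVirasoroRep c L)
    (hw : IsLowestWeight L h w) :
    L (-3) (L (-3) (weightSixVector L w)) =
      (216 * h ^ 2 + 144 * h * c + 24 * c ^ 2 + 15844/35 * h + 1548/35 * c) • w := by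
  simp (disch := decide) only [weightSixVector, map_add, map_sub, map_smul, map_zero,
    hL.apply_apply_of_lt, hw.1, hw.2, Int.reduceAdd, ↓reduceIte, Int.reduceEq]
  module

theorem neg_one_apply_weightSixVector_eq_zero (hL : IsVirasoroRep c L)
    (hw : IsLowestWeight L (-1/5) w)
    (hnull1 : (2 : ℂ) • L 2 w - (5 : ℂ) • L 1 (L 1 w) = 0)
    (hnull2 : L 3 w - (5 : ℂ) • L 2 (L 1 w) = 0) :
    L (-1) (weightSixVector L w) = 0 := by
  rw [neg_one_apply_weightSixVector hL hw, add_assoc, hL.null_relation_level_five hnull1 hnull2]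
  module

theorem shapovalov_weightSixVector_left (B : V →ₗ[ℂ] V →ₗ[ℂ] ℂ)
    (hB : ∀ (n : ℤ) (x y : V), B (L n x) y = B x (L (-n) y)) (x : V) :
    B (weightSixVector L w) x =
      B w ((4 : ℂ) • L (-5) (L (-1) x) + (3 : ℂ) • L (-3) (L (-3) x)
        - (684/35 : ℂ) • L (-6) x) := by
  simp only [weightSixVector, map_add, map_sub, map_smul, LinearMap.add_apply,
    LinearMap.sub_apply, LinearMap.smul_apply, hB]

end

/-- for a `(2,5)`-model lowest-weight vector `w` (weight `−1/5`,
null relations `(2L₂ − 5L₁L₁)w = 0` and `(L₃ − 5L₂L₁)w = 0`), the vector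
`ψ = (4L₁L₅ + 3L₃L₃ − (684/35)L₆)w` is quasi-primary and
`B(ψ, ψ) = (6539268/6125)·B(w, w)`. -/
theorem quasiprimary_weight_six_W_norm
    (V : Type*) [AddCommGroup V] [Module ℂ V]
    (c : ℂ) (hc : c = -22/5) (L : ℤ → Module.End ℂ V)
    (hL : ∀ (n m : ℤ) (x : V), L n (L m x) - L m (L n x) =
      ((m : ℂ) - (n : ℂ)) • L (m + n) x +
        (if m + n = 0 then c / 12 * (m : ℂ) * ((m : ℂ) ^ 2 - 1) else 0) • x)
    (B : V →ₗ[ℂ] V →ₗ[ℂ] ℂ)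
    (hB : ∀ (n : ℤ) (x y : V), B (L n x) y = B x (L (-n) y))
    (w : V) (hw : ∀ n : ℤ, n ≤ -1 → L n w = 0)
    (hw0 : L 0 w = (-(1/5) : ℂ) • w)
    (hnull1 : (2 : ℂ) • L 2 w - (5 : ℂ) • L 1 (L 1 w) = 0)
    (hnull2 : L 3 w - (5 : ℂ) • L 2 (L 1 w) = 0)
    (ψ : V)
    (hψ : ψ = (4 : ℂ) • L 1 (L 5 w) + (3 : ℂ) • L 3 (L 3 w) - (684/35 : ℂ) • L 6 w) :
    L (-1) ψ = 0 ∧ B ψ ψ = (6539268/6125 : ℂ) * B w w := by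
  change ψ = weightSixVector L w at hψ
  have hlw : IsLowestWeight L (-1/5) w := ⟨hw, by rw [hw0, neg_div]⟩
  have hquasi : L (-1) ψ = 0 := hψ ▸ neg_one_apply_weightSixVector_eq_zero hL hlw hnull1 hnull2
  refine ⟨hquasi, ?_⟩
  calc B ψ ψ = B (weightSixVector L w) ψ := by rw [← hψ]
    _ = B w ((4 : ℂ) • L (-5) (L (-1) ψ) + (3 : ℂ) • L (-3) (L (-3) ψ)
          - (684/35 : ℂ) • L (-6) ψ) := shapovalov_weightSixVector_left B hB ψ
    _ = (6539268/6125 : ℂ) * B w w := by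
      rw [hquasi, hψ, neg_three_neg_three_apply_weightSixVector hL hlw,
        neg_six_apply_weightSixVector hL hlw, hc]
      simp only [map_zero, smul_zero, zero_add, map_sub, map_smul, smul_eq_mul]
      ring
end

section
/- Let g₂, g₃ ∈ ℝ and p(x) = 4x³ − g₂x − g₃. Let I ⊆ ℝ be an open interval and u : I → ℝ a smooth function with (u′(z))² = p(u(z)) and u′(z) > 0 for all z ∈ I, and let Ψ be a smooth function on an open interval containing u(I). Define G(z) := (u′(z))^{−1/5}·Ψ(u(z)). Then G satisfies the third-order equation (25/12)·G‴(z) = −(1/5)·u′(z)·G(z) + u(z)·G′(z) for all z ∈ I if and only if Ψ satisfies p(x)·Ψ‴(x) + f(x)·Ψ″(x) + g(x)·Ψ′(x) + h(x)·Ψ(x) = 0 for all x ∈ u(I), where f = (6/5)p′, g = (3/100)·(p′)²/p + (9/50)·p″, and h = −(33/500)·(p′)³/p² + (33/250)·p′p″/p − 288/125. -/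
set_option maxHeartbeats 1000000


/-- with `p(x) = 4x³ − g₂x − g₃`, a smooth `u` on an open interval
`I` satisfying `(u′)² = p ∘ u` and `u′ > 0`, and `Ψ` smooth on an open interval
`J ⊇ u(I)`, the function `G(z) = (u′(z))^{−1/5}·Ψ(u(z))` satisfies
`(25/12)G‴ = −(1/5)u′·G + u·G′` on `I` if and only if `Ψ` satisfies
`pΨ‴ + fΨ″ + gΨ′ + hΨ = 0` on `u(I)`, with `f = (6/5)p′`,
`g = (3/100)(p′)²/p + (9/50)p″` and
`h = −(33/500)(p′)³/p² + (33/250)p′p″/p − 288/125`. -/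
theorem twoPoint_ODE_algebraic_coordinates
    (g₂ g₃ : ℝ) (P : ℝ → ℝ) (hP : P = fun x => 4 * x ^ 3 - g₂ * x - g₃)
    (I : Set ℝ) (hIo : IsOpen I) (hIc : I.OrdConnected)
    (u : ℝ → ℝ) (hu : ContDiffOn ℝ (⊤ : ℕ∞) u I)
    (J : Set ℝ) (hJo : IsOpen J) (hJc : J.OrdConnected)
    (hmaps : Set.MapsTo u I J)
    (Ψ : ℝ → ℝ) (hΨ : ContDiffOn ℝ (⊤ : ℕ∞) Ψ J)
    (hup : ∀ z ∈ I, (deriv u z) ^ 2 = P (u z))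
    (hpos : ∀ z ∈ I, 0 < deriv u z)
    (G : ℝ → ℝ) (hG : G = fun z => deriv u z ^ (-(1/5) : ℝ) * Ψ (u z)) :
    (∀ z ∈ I, (25/12) * iteratedDeriv 3 G z =
        -(1/5) * deriv u z * G z + u z * deriv G z) ↔
    (∀ x ∈ u '' I,
      P x * iteratedDeriv 3 Ψ x
        + (6/5) * deriv P x * iteratedDeriv 2 Ψ x
        + ((3/100) * (deriv P x) ^ 2 / P x + (9/50) * iteratedDeriv 2 P x) * deriv Ψ x
        + (-(33/500) * (deriv P x) ^ 3 / (P x) ^ 2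
            + (33/250) * (deriv P x * iteratedDeriv 2 P x) / P x - 288/125) * Ψ x
      = 0) := by
  have hI : ∀ z ∈ I, I ∈ nhds z := fun z hz => hIo.mem_nhds hz
  -- derivatives of P
  have hPda : ∀ x, HasDerivAt P (12 * x ^ 2 - g₂) x := by
    intro x
    rw [hP]
    have h := (((hasDerivAt_pow 3 x).const_mul (4:ℝ)).sub
      ((hasDerivAt_id x).const_mul g₂)).sub_const g₃
    refine h.congr_deriv ?_
    push_cast; ring
  have hPd : deriv P = fun x => 12 * x ^ 2 - g₂ := funext fun x => (hPda x).deriv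
  have hPdx : ∀ x, deriv P x = 12 * x ^ 2 - g₂ := fun x => (hPda x).deriv
  have hPdd : ∀ x, iteratedDeriv 2 P x = 24 * x := by
    intro x
    rw [iteratedDeriv_succ, iteratedDeriv_one, hPd]
    have h : HasDerivAt (fun x : ℝ => 12 * x ^ 2 - g₂) (24 * x) x := by
      have := ((hasDerivAt_pow 2 x).const_mul (12:ℝ)).sub_const g₂
      refine this.congr_deriv ?_
      push_cast; ring
    exact h.deriv
  -- iterated derivatives of Ψ
  have h2Ψ : iteratedDeriv 2 Ψ = deriv (deriv Ψ) := by
    rw [iteratedDeriv_succ, iteratedDeriv_one]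
  have h3Ψ : iteratedDeriv 3 Ψ = deriv (deriv (deriv Ψ)) := by
    rw [iteratedDeriv_succ, h2Ψ]
  -- differentiability plumbing
  have hΨ1 : ContDiffOn ℝ (⊤:ℕ∞) (deriv Ψ) J := hΨ.deriv_of_isOpen hJo (by simp)
  have hΨ2 : ContDiffOn ℝ (⊤:ℕ∞) (deriv (deriv Ψ)) J :=
    hΨ1.deriv_of_isOpen hJo (by exact le_rfl)
  have hΨ0d : ∀ x ∈ J, HasDerivAt Ψ (deriv Ψ x) x := fun x hx =>
    ((hΨ.differentiableOn (by simp)).differentiableAt (hJo.mem_nhds hx)).hasDerivAt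
  have hΨ1d : ∀ x ∈ J, HasDerivAt (deriv Ψ) (deriv (deriv Ψ) x) x := fun x hx =>
    ((hΨ1.differentiableOn (by simp)).differentiableAt
      (hJo.mem_nhds hx)).hasDerivAt
  have hΨ2d : ∀ x ∈ J, HasDerivAt (deriv (deriv Ψ)) (deriv (deriv (deriv Ψ)) x) x := fun x hx =>
    ((hΨ2.differentiableOn (by simp)).differentiableAt
      (hJo.mem_nhds hx)).hasDerivAt
  have hud : ∀ z ∈ I, HasDerivAt u (deriv u z) z := fun z hz =>
    ((hu.differentiableOn (by simp)).differentiableAt (hI z hz)).hasDerivAt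
  have hw1 : ContDiffOn ℝ (⊤:ℕ∞) (deriv u) I := hu.deriv_of_isOpen hIo (by simp)
  have hwaux : ∀ z ∈ I, HasDerivAt (deriv u) (deriv (deriv u) z) z := fun z hz =>
    ((hw1.differentiableOn (by simp)).differentiableAt (hI z hz)).hasDerivAt
  have hwne : ∀ z ∈ I, deriv u z ≠ 0 := fun z hz => (hpos z hz).ne'
  -- u'' = P'(u)/2
  have hw' : ∀ z ∈ I, HasDerivAt (deriv u) ((12 * (u z) ^ 2 - g₂) / 2) z := by
    intro z hz
    have h1 := hwaux z hz
    have e1 := h1.pow 2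
    have e2 := (hPda (u z)).comp z (hud z hz)
    have hev : (fun t => (deriv u t) ^ 2) =ᶠ[nhds z] (P ∘ u) :=
      Filter.eventuallyEq_of_mem (hI z hz) fun t ht => hup t ht
    have e4 : HasDerivAt (fun t => (deriv u t) ^ 2) ((12 * (u z) ^ 2 - g₂) * deriv u z) z :=
      e2.congr_of_eventuallyEq hev
    have h5 := e1.unique e4
    have h6 : deriv (deriv u) z * deriv u z = ((12 * (u z) ^ 2 - g₂) / 2) * deriv u z := by
      push_cast at h5
      linear_combination h5 / 2
    have h7 := mul_right_cancel₀ (hwne z hz) h6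
    rw [← h7]
    exact h1
  -- A := (u')^{4/5}
  obtain ⟨A, hAdef⟩ : ∃ A : ℝ → ℝ, A = fun t => deriv u t ^ ((4:ℝ)/5) := ⟨_, rfl⟩
  have hApos : ∀ z ∈ I, 0 < A z := by
    intro z hz
    rw [hAdef]
    exact Real.rpow_pos_of_pos (hpos z hz) _
  have hAd : ∀ z ∈ I, HasDerivAt A ((2/5) * (A z / deriv u z) * (12 * (u z) ^ 2 - g₂)) z := by
    intro z hz
    have h := (hw' z hz).rpow_const (p := (4:ℝ)/5) (Or.inl (hwne z hz))
    rw [hAdef]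
    convert h using 1
    simp only
    rw [show ((4:ℝ)/5 - 1) = 4/5 + (-1) by norm_num, Real.rpow_add (hpos z hz),
      Real.rpow_neg_one]
    field_simp [hwne z hz]
    ring
  -- G agrees with A/w * Ψ∘u on I
  have hGF : ∀ t ∈ I, G t = A t / deriv u t * Ψ (u t) := by
    intro t ht
    have h1 : (deriv u t) ^ (-(1/5):ℝ) = A t / deriv u t := by
      rw [hAdef, show (-(1/5):ℝ) = 4/5 - 1 by norm_num, Real.rpow_sub (hpos t ht),
        Real.rpow_one]
    simp only [hG]
    rw [h1]
  -- explicit derivative formulas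
  obtain ⟨F1, hF1def⟩ : ∃ F1 : ℝ → ℝ, F1 = fun t =>
    -(1/10) * (A t / (deriv u t) ^ 2) * (12 * (u t) ^ 2 - g₂) * Ψ (u t)
      + A t * deriv Ψ (u t) := ⟨_, rfl⟩
  obtain ⟨F2, hF2def⟩ : ∃ F2 : ℝ → ℝ, F2 = fun t =>
    (3/50) * (A t / (deriv u t) ^ 3) * (12 * (u t) ^ 2 - g₂) ^ 2 * Ψ (u t)
      + -(1/10) * (A t / deriv u t) * (24 * u t) * Ψ (u t)
      + (3/10) * (A t / deriv u t) * (12 * (u t) ^ 2 - g₂) * deriv Ψ (u t)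
      + A t * deriv u t * deriv (deriv Ψ) (u t) := ⟨_, rfl⟩
  obtain ⟨F3, hF3def⟩ : ∃ F3 : ℝ → ℝ, F3 = fun t =>
    A t * (deriv u t) ^ 2 * deriv (deriv (deriv Ψ)) (u t)
      + (6/5) * (A t * (12 * (u t) ^ 2 - g₂)) * deriv (deriv Ψ) (u t)
      + ((3/100) * (A t / (deriv u t) ^ 2) * (12 * (u t) ^ 2 - g₂) ^ 2
          + (1/5) * (A t * (24 * u t))) * deriv Ψ (u t)
      + (-(33/500) * (A t / (deriv u t) ^ 4) * (12 * (u t) ^ 2 - g₂) ^ 3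
          + (13/100) * (A t / (deriv u t) ^ 2) * ((12 * (u t) ^ 2 - g₂) * (24 * u t))
          - (12/5) * A t) * Ψ (u t) := ⟨_, rfl⟩
  -- component derivatives at a point of I
  have hcomp : ∀ z ∈ I,
      HasDerivAt (fun t => Ψ (u t)) (deriv Ψ (u z) * deriv u z) z ∧
      HasDerivAt (fun t => deriv Ψ (u t)) (deriv (deriv Ψ) (u z) * deriv u z) z ∧
      HasDerivAt (fun t => deriv (deriv Ψ) (u t)) (deriv (deriv (deriv Ψ)) (u z) * deriv u z) z ∧
      HasDerivAt (fun t => 12 * (u t) ^ 2 - g₂) (24 * u z * deriv u z) z ∧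
      HasDerivAt (fun t => 24 * u t) (24 * deriv u z) z := by
    intro z hz
    have hx := hmaps hz
    refine ⟨(hΨ0d (u z) hx).comp z (hud z hz), (hΨ1d (u z) hx).comp z (hud z hz),
      (hΨ2d (u z) hx).comp z (hud z hz), ?_, (hud z hz).const_mul 24⟩
    have h := (((hud z hz).pow 2).const_mul (12:ℝ)).sub_const g₂
    refine h.congr_deriv ?_
    push_cast; ring
  -- hasDerivAt chain
  have hD1 : ∀ z ∈ I, HasDerivAt (fun t => A t / deriv u t * Ψ (u t)) (F1 z) z := by
    intro z hz
    obtain ⟨hc0, hc1, hc2, hc3, hc4⟩ := hcomp z hz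
    have h := ((hAd z hz).div (hw' z hz) (hwne z hz)).mul hc0
    refine h.congr_deriv ?_
    rw [hF1def]
    beta_reduce
    simp only [Pi.div_apply]
    have hw0 := hwne z hz
    revert hw0
    generalize deriv Ψ (u z) = c1
    generalize Ψ (u z) = c0
    generalize A z = a
    generalize deriv u z = w
    generalize u z = x
    intro hw0
    field_simp
    ring
  have hD2 : ∀ z ∈ I, HasDerivAt F1 (F2 z) z := by
    intro z hz
    obtain ⟨hc0, hc1, hc2, hc3, hc4⟩ := hcomp z hz
    have h := ((((hAd z hz).div ((hw' z hz).pow 2) (pow_ne_zero 2 (hwne z hz))).const_mul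
        (-(1/10) : ℝ)).mul hc3 |>.mul hc0).add ((hAd z hz).mul hc1)
    rw [hF1def]
    refine h.congr_deriv ?_
    rw [hF2def]
    beta_reduce
    push_cast
    norm_num
    have hw0 := hwne z hz
    revert hw0
    generalize deriv (deriv Ψ) (u z) = c2
    generalize deriv Ψ (u z) = c1
    generalize Ψ (u z) = c0
    generalize A z = a
    generalize deriv u z = w
    generalize u z = x
    intro hw0
    field_simp
    ring
  have hD3 : ∀ z ∈ I, HasDerivAt F2 (F3 z) z := by
    intro z hz
    obtain ⟨hc0, hc1, hc2, hc3, hc4⟩ := hcomp z hz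
    have t1 := ((((hAd z hz).div ((hw' z hz).pow 3) (pow_ne_zero 3 (hwne z hz))).const_mul
        ((3:ℝ)/50)).mul (hc3.pow 2)).mul hc0
    have t2 := ((((hAd z hz).div (hw' z hz) (hwne z hz)).const_mul (-(1/10) : ℝ)).mul hc4).mul hc0
    have t3 := ((((hAd z hz).div (hw' z hz) (hwne z hz)).const_mul ((3:ℝ)/10)).mul hc3).mul hc1
    have t4 := ((hAd z hz).mul (hw' z hz)).mul hc2
    have h := ((t1.add t2).add t3).add t4
    rw [hF2def]
    refine h.congr_deriv ?_
    rw [hF3def]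
    beta_reduce
    push_cast
    norm_num
    have hw0 := hwne z hz
    revert hw0
    generalize deriv (deriv (deriv Ψ)) (u z) = c3
    generalize deriv (deriv Ψ) (u z) = c2
    generalize deriv Ψ (u z) = c1
    generalize Ψ (u z) = c0
    generalize A z = a
    generalize deriv u z = w
    generalize u z = x
    intro hw0
    field_simp
    ring
  -- pointwise identification of derivatives of G on I
  have hG1 : ∀ z ∈ I, deriv G z = F1 z := by
    intro z hz
    have hev : G =ᶠ[nhds z] (fun t => A t / deriv u t * Ψ (u t)) :=
      Filter.eventuallyEq_of_mem (hI z hz) fun t ht => hGF t ht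
    rw [hev.deriv_eq]
    exact (hD1 z hz).deriv
  have hG2 : ∀ z ∈ I, iteratedDeriv 2 G z = F2 z := by
    intro z hz
    rw [iteratedDeriv_succ, iteratedDeriv_one]
    have hev : deriv G =ᶠ[nhds z] F1 :=
      Filter.eventuallyEq_of_mem (hI z hz) fun t ht => hG1 t ht
    rw [hev.deriv_eq]
    exact (hD2 z hz).deriv
  have hG3 : ∀ z ∈ I, iteratedDeriv 3 G z = F3 z := by
    intro z hz
    rw [iteratedDeriv_succ]
    have hev : iteratedDeriv 2 G =ᶠ[nhds z] F2 :=
      Filter.eventuallyEq_of_mem (hI z hz) fun t ht => hG2 t ht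
    rw [hev.deriv_eq]
    exact (hD3 z hz).deriv
  -- the key algebraic identity
  have key : ∀ z ∈ I,
      (25/12) * F3 z - (-(1/5) * deriv u z * (A z / deriv u z * Ψ (u z)) + u z * F1 z)
        = (25/12) * A z *
          (P (u z) * iteratedDeriv 3 Ψ (u z)
            + (6/5) * deriv P (u z) * iteratedDeriv 2 Ψ (u z)
            + ((3/100) * (deriv P (u z)) ^ 2 / P (u z)
                + (9/50) * iteratedDeriv 2 P (u z)) * deriv Ψ (u z)
            + (-(33/500) * (deriv P (u z)) ^ 3 / (P (u z)) ^ 2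
                + (33/250) * (deriv P (u z) * iteratedDeriv 2 P (u z)) / P (u z)
                - 288/125) * Ψ (u z)) := by
    intro z hz
    rw [hF1def, hF3def]
    beta_reduce
    simp only [hPdx, hPdd, h2Ψ, h3Ψ]
    rw [← hup z hz]
    have hw0 := hwne z hz
    revert hw0
    generalize deriv (deriv (deriv Ψ)) (u z) = c3
    generalize deriv (deriv Ψ) (u z) = c2
    generalize deriv Ψ (u z) = c1
    generalize Ψ (u z) = c0
    generalize A z = a
    generalize deriv u z = w
    generalize u z = x
    intro hw0
    field_simp
    ring
  -- conclude
  constructor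
  · rintro h x ⟨z, hz, rfl⟩
    have heq := h z hz
    rw [hG3 z hz, hG1 z hz, hGF z hz] at heq
    have h0 := key z hz
    rw [show (25/12) * F3 z - (-(1/5) * deriv u z * (A z / deriv u z * Ψ (u z)) + u z * F1 z)
        = 0 by linarith] at h0
    have hAne : (25/12) * A z ≠ 0 := (mul_pos (by norm_num) (hApos z hz)).ne'
    rcases mul_eq_zero.mp h0.symm with h' | h'
    · exact absurd h' hAne
    · exact h'
  · intro h z hz
    have hQ := h (u z) ⟨z, hz, rfl⟩
    have h0 := key z hz
    rw [hQ, mul_zero] at h0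
    rw [hG3 z hz, hG1 z hz, hGF z hz]
    linarith
end

section
/- In ℚ⟦q⟧, let a := ∑_{n≥0} q^{n²+n}/(q;q)_n, F₂ := 11·a + 60·q·(da/dq), E₆ := 1 − 504·∑_{n≥1} σ₅(n)q^n, E₈ := 1 + 480·∑_{n≥1} σ₇(n)q^n, and let F₈ := (1/6)·(1309·E₈·a + 235·E₆·F₂). Then the coefficients of q⁰, q¹, q², q³, q⁴ in F₈ are 649, −112420, 6348609, 173671679, 1424241669. -/
open PowerSeries

/-- The q-Pochhammer symbol `(q;q)_n = ∏_{j=1}^n (1 − q^j)` in `ℚ⟦q⟧`. -/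
noncomputable def qPoch (n : ℕ) : PowerSeries ℚ :=
  ∏ j ∈ Finset.Icc 1 n, (1 - (PowerSeries.X : PowerSeries ℚ) ^ j)

/-- The series `a = ∑_{n≥0} q^{n²+n}/(q;q)_n`, defined coefficientwise. -/
noncomputable def rrA : PowerSeries ℚ :=
  PowerSeries.mk fun h =>
    PowerSeries.coeff h
      (∑ n ∈ Finset.range (h + 1), PowerSeries.X ^ (n ^ 2 + n) * (qPoch n)⁻¹)

/-- The operation `q·d/dq`, multiplying the coefficient of `q^n` by `n`. -/
noncomputable def qDq (f : PowerSeries ℚ) : PowerSeries ℚ :=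
  PowerSeries.mk fun n => (n : ℚ) * PowerSeries.coeff n f

/-- `F₂ = 11·a + 60·q·(da/dq)`. -/
noncomputable def F₂ : PowerSeries ℚ := 11 * rrA + 60 * qDq rrA

/-- The Eisenstein series `E₆ = 1 − 504·∑_{n≥1} σ₅(n)q^n` as a q-expansion. -/
noncomputable def E₆ : PowerSeries ℚ :=
  PowerSeries.mk fun n =>
    if n = 0 then 1 else -504 * ∑ d ∈ Nat.divisors n, (d : ℚ) ^ 5

/-- The Eisenstein series `E₈ = 1 + 480·∑_{n≥1} σ₇(n)q^n` as a q-expansion. -/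
noncomputable def E₈ : PowerSeries ℚ :=
  PowerSeries.mk fun n =>
    if n = 0 then 1 else 480 * ∑ d ∈ Nat.divisors n, (d : ℚ) ^ 7

/-- `F₈ = (1/6)·(1309·E₈·a + 235·E₆·F₂)`. -/
noncomputable def F₈ : PowerSeries ℚ :=
  PowerSeries.C (1/6 : ℚ) * (1309 * E₈ * rrA + 235 * E₆ * F₂)

/-!
Only finitely many terms matter below `q⁵`: the summands of `a` with `n ≥ 2` start at `q⁶`, so
`a ≡ 1 + q²/(1 - q)`, the coefficients of `F₂` are `(11 + 60n)·aₙ`, and those of `E₆`, `E₈` are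
explicit divisor sums. The claim is then a finite Cauchy-product computation.
-/

lemma coeff_qDq (f : PowerSeries ℚ) (n : ℕ) : coeff n (qDq f) = n * coeff n f :=
  coeff_mk _ _

lemma coeff_F₂ (n : ℕ) : coeff n F₂ = (11 + 60 * n) * coeff n rrA := by
  simp only [F₂, map_add, coeff_qDq, ← map_ofNat C, coeff_C_mul]
  ring

lemma inv_one_sub_X {K : Type*} [Field K] : (1 - X : K⟦X⟧)⁻¹ = mk 1 :=
  (PowerSeries.inv_eq_iff_mul_eq_one (by simp)).2 (mk_one_mul_one_sub_eq_one K)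

lemma coeff_rrA_of_lt_six {n : ℕ} (hn : n < 6) : coeff n rrA = if n = 1 then 0 else 1 := by
  interval_cases n <;>
    simp [rrA, Finset.sum_range_succ, qPoch, inv_one_sub_X, coeff_X_pow_mul', coeff_one]

lemma coeff_F₈ (n : ℕ) :
    coeff n F₈ = (1309 * coeff n (E₈ * rrA) + 235 * coeff n (E₆ * F₂)) / 6 := by
  simp only [F₈, coeff_C_mul, map_add, mul_assoc, ← map_ofNat C]
  ring

/-- the coefficients of `q⁰,…,q⁴` in `F₈` are
`649, −112420, 6348609, 173671679, 1424241669`. -/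
theorem coeff_F8 :
    ∀ n : ℕ, n ≤ 4 → PowerSeries.coeff n F₈ =
      ([649, -112420, 6348609, 173671679, 1424241669] : List ℚ).getD n 0 := by
  intro n hn
  rw [coeff_F₈, coeff_mul, coeff_mul]
  interval_cases n <;>
    simp [Finset.Nat.sum_antidiagonal_eq_sum_range_succ_mk, Finset.sum_range_succ,
      coeff_rrA_of_lt_six, coeff_F₂, E₆, E₈, Nat.divisors_ofNat] <;>
    norm_num
end
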